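/- Let μ be a probability measure on [0,∞) with μ({0}) < 1, and let U = Σ_{n=0}^∞ μ^{*n} be its renewal measure. Then U([0,1]) < ∞ and for every h ≥ 0, U([0,h]) ≤ (⌊h⌋ + 1) · U([0,1]); in particular U([0,h]) grows at most linearly in h. -/

import Mathlib

/-!
Since `μ` lives on `[0, ∞)`, the partial sums `Σ_{n<N} μ^{*n}([a, a + L])` for `a > 0` are
averages, under `μ(dy)`, of the partial sums of one term fewer at `a - y`, while for `a ≤ 0` the
window `[a, a + L]` meets the support only inside `[0, L]`. Induction on `N` therefore gives
`U([a, a + L]) ≤ U([0, L])` for every `a`, and covering `[0, h]` by `⌊h / L⌋ + 1` windows of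
length `L` gives `U([0, h]) ≤ (⌊h / L⌋ + 1) U([0, L])`.
For finiteness pick `δ > 0` with `p = μ([0, δ]) < 1` (right continuity at `0`). A sum of `n`
nonnegative terms is at most `δ` only if every term is, so `μ^{*n}([0, δ]) ≤ pⁿ` and
`U([0, δ]) ≤ (1 - p)⁻¹`; the covering bound with `L = δ` then bounds `U([0, 1])`.
-/

open MeasureTheory Measure Set Filter Topology

namespace MeasureTheory.Measure

variable {M : Type*} [AddMonoid M] [MeasurableSpace M]

lemma conv_apply_eq_lintegral [MeasurableAdd₂ M] (ν μ : Measure M) [SFinite ν] [SFinite μ]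
    {s : Set M} (hs : MeasurableSet s) : (ν ∗ μ) s = ∫⁻ y, ν ((· + y) ⁻¹' s) ∂μ := by
  rw [conv, map_apply measurable_add hs, prod_apply_symm (measurable_add hs)]
  rfl

lemma measurable_measure_preimage_add_const [MeasurableAdd₂ M] (ν : Measure M) [SFinite ν]
    {s : Set M} (hs : MeasurableSet s) : Measurable fun y => ν ((· + y) ⁻¹' s) :=
  measurable_measure_prodMk_right (measurable_add hs)

noncomputable def convPow (μ : Measure M) : ℕ → Measure M
  | 0 => dirac 0
  | n + 1 => convPow μ n ∗ μ

@[simp]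
lemma convPow_zero (μ : Measure M) : convPow μ 0 = dirac 0 := rfl

@[simp]
lemma convPow_succ (μ : Measure M) (n : ℕ) : convPow μ (n + 1) = convPow μ n ∗ μ := rfl

instance isProbabilityMeasure_convPow [MeasurableAdd₂ M] (μ : Measure M) [IsProbabilityMeasure μ]
    (n : ℕ) : IsProbabilityMeasure (convPow μ n) := by
  induction n with
  | zero => rw [convPow_zero]; infer_instance
  | succ n _ => rw [convPow_succ]; infer_instance

noncomputable def renewalMeasure (μ : Measure M) : Measure M := sum (convPow μ)

end MeasureTheory.Measure

lemma exists_gt_measure_Iic_lt {μ : Measure ℝ} [IsFiniteMeasure μ] {x : ℝ} {c : ENNReal}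
    (h : μ (Iic x) < c) : ∃ y > x, μ (Iic y) < c := by
  have hinter : ⋂ r > x, Iic r = Iic x := by
    ext z
    simpa using ⟨le_of_forall_gt_imp_ge_of_dense, fun hz r hr => hz.trans hr.le⟩
  have hlim : Tendsto (fun r => μ (Iic r)) (𝓝[>] x) (𝓝 (μ (Iic x))) := by
    rw [← hinter]
    exact tendsto_measure_biInter_gt (fun r _ => measurableSet_Iic.nullMeasurableSet)
      (fun r s _ hrs => Iic_subset_Iic.2 hrs) ⟨x + 1, by linarith, measure_ne_top μ _⟩
  obtain ⟨y, hy, hxy⟩ := ((hlim.eventually (gt_mem_nhds h)).and self_mem_nhdsWithin).exists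
  exact ⟨y, hxy, hy⟩

lemma measure_Icc_zero_le_floor_mul (U : Measure ℝ) {L : ℝ} (hL : 0 < L)
    (hshift : ∀ a, U (Icc a (a + L)) ≤ U (Icc 0 L)) (h : ℝ) :
    U (Icc 0 h) ≤ (⌊h / L⌋₊ + 1) * U (Icc 0 L) := by
  have hcover : Icc 0 h ⊆ ⋃ j ∈ Finset.range (⌊h / L⌋₊ + 1), Icc (j * L) (j * L + L) := by
    intro x ⟨hx0, hxh⟩
    have hxL : 0 ≤ x / L := div_nonneg hx0 hL.le
    refine mem_biUnion (x := ⌊x / L⌋₊) (Finset.mem_range_succ_iff.2 ?_) ⟨?_, ?_⟩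
    · exact Nat.floor_le_floor (div_le_div_of_nonneg_right hxh hL.le)
    · exact (le_div_iff₀ hL).1 (Nat.floor_le hxL)
    · rw [← add_one_mul]
      exact ((div_lt_iff₀ hL).1 (Nat.lt_floor_add_one _)).le
  calc U (Icc 0 h) ≤ ∑ j ∈ Finset.range (⌊h / L⌋₊ + 1), U (Icc (j * L) (j * L + L)) :=
        (measure_mono hcover).trans (measure_biUnion_finset_le _ _)
    _ ≤ ∑ _j ∈ Finset.range (⌊h / L⌋₊ + 1), U (Icc 0 L) :=
        Finset.sum_le_sum fun j _ => hshift _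
    _ = (⌊h / L⌋₊ + 1) * U (Icc 0 L) := by
        rw [Finset.sum_const, Finset.card_range, nsmul_eq_mul]
        push_cast
        rfl

section Renewal

variable {μ : Measure ℝ} [IsProbabilityMeasure μ]

lemma convPow_Iio_zero (hμ : μ (Iio 0) = 0) (n : ℕ) : convPow μ n (Iio 0) = 0 := by
  induction n with
  | zero => simp [dirac_apply' _ measurableSet_Iio]
  | succ n ih =>
    rw [convPow_succ, conv_apply_eq_lintegral _ _ measurableSet_Iio, lintegral_eq_zero_iff
      (measurable_measure_preimage_add_const _ measurableSet_Iio)]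
    filter_upwards [measure_eq_zero_iff_ae_notMem.1 hμ] with y hy
    rw [preimage_add_const_Iio]
    exact measure_mono_null (Iio_subset_Iio (by simpa using hy)) ih

lemma renewalMeasure_Icc_le (hμ : μ (Iio 0) = 0) (a L : ℝ) :
    renewalMeasure μ (Icc a (a + L)) ≤ renewalMeasure μ (Icc 0 L) := by
  set W : ℕ → ℝ → ENNReal := fun N b => ∑ n ∈ Finset.range N, convPow μ n (Icc b (b + L))
  have hle_renewal : ∀ N, ∑ n ∈ Finset.range N, convPow μ n (Icc 0 L) ≤
      renewalMeasure μ (Icc 0 L) := fun N => by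
    rw [renewalMeasure, Measure.sum_apply _ measurableSet_Icc]
    exact ENNReal.sum_le_tsum _
  have hpartial : ∀ N b, W N b ≤ renewalMeasure μ (Icc 0 L) := by
    intro N
    induction N with
    | zero => simp [W]
    | succ N ih =>
      intro b
      rcases le_or_gt b 0 with hb | hb
      · refine (Finset.sum_le_sum fun n _ => ?_).trans (hle_renewal (N + 1))
        calc convPow μ n (Icc b (b + L)) ≤ convPow μ n (Iio 0 ∪ Icc 0 L) :=
              measure_mono fun x ⟨_, hx⟩ => (lt_or_ge x 0).imp id fun hx0 => ⟨hx0, by linarith⟩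
          _ ≤ convPow μ n (Iio 0) + convPow μ n (Icc 0 L) := measure_union_le _ _
          _ = convPow μ n (Icc 0 L) := by rw [convPow_Iio_zero hμ, zero_add]
      · have hW : W (N + 1) b = ∫⁻ y, W N (b - y) ∂μ := by
          simp only [W, Finset.sum_range_succ', convPow_succ, convPow_zero]
          rw [dirac_apply' _ measurableSet_Icc, indicator_of_notMem (by simp [hb]), add_zero]
          simp only [conv_apply_eq_lintegral _ _ measurableSet_Icc]
          rw [← lintegral_finsetSum _ fun n _ =>
            measurable_measure_preimage_add_const _ measurableSet_Icc]
          simp only [preimage_add_const_Icc, sub_add_eq_add_sub]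
        calc W (N + 1) b = ∫⁻ y, W N (b - y) ∂μ := hW
          _ ≤ ∫⁻ _, renewalMeasure μ (Icc 0 L) ∂μ := lintegral_mono fun y => ih _
          _ = renewalMeasure μ (Icc 0 L) := by simp
  rw [renewalMeasure, Measure.sum_apply _ measurableSet_Icc, ENNReal.tsum_eq_iSup_nat]
  exact iSup_le fun N => hpartial N a

lemma convPow_Iic_le_pow (hμ : μ (Iio 0) = 0) (δ : ℝ) (n : ℕ) :
    convPow μ n (Iic δ) ≤ μ (Iic δ) ^ n := by
  induction n with
  | zero => exact prob_le_one.trans_eq (pow_zero _).symm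
  | succ n ih =>
    have hpointwise : ∀ᵐ y ∂μ,
        convPow μ n ((· + y) ⁻¹' Iic δ) ≤ (Iic δ).indicator (fun _ => convPow μ n (Iic δ)) y := by
      filter_upwards [measure_eq_zero_iff_ae_notMem.1 hμ] with y hy
      rw [preimage_add_const_Iic]
      rcases le_or_gt y δ with hyδ | hyδ
      · rw [indicator_of_mem (mem_Iic.2 hyδ)]
        exact measure_mono (Iic_subset_Iic.2 (by simp_all))
      · rw [indicator_of_notMem (notMem_Iic.2 hyδ)]
        exact (measure_mono (Iic_subset_Iio.2 (by linarith))).trans_eq (convPow_Iio_zero hμ n)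
    calc convPow μ (n + 1) (Iic δ)
        ≤ ∫⁻ y, (Iic δ).indicator (fun _ => convPow μ n (Iic δ)) y ∂μ := by
          rw [convPow_succ, conv_apply_eq_lintegral _ _ measurableSet_Iic]
          exact lintegral_mono_ae hpointwise
      _ = convPow μ n (Iic δ) * μ (Iic δ) := lintegral_indicator_const measurableSet_Iic _
      _ ≤ μ (Iic δ) ^ (n + 1) := by rw [pow_succ]; gcongr

lemma renewalMeasure_Iic_lt_top (hμ : μ (Iio 0) = 0) {δ : ℝ} (hδ : μ (Iic δ) < 1) :
    renewalMeasure μ (Iic δ) < ⊤ := by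
  rw [renewalMeasure, Measure.sum_apply _ measurableSet_Iic]
  calc ∑' n, convPow μ n (Iic δ) ≤ ∑' n, μ (Iic δ) ^ n :=
        ENNReal.tsum_le_tsum (convPow_Iic_le_pow hμ δ)
    _ = (1 - μ (Iic δ))⁻¹ := ENNReal.tsum_geometric _
    _ < ⊤ := ENNReal.inv_lt_top.2 (tsub_pos_of_lt hδ)

end Renewal

/-- If `μ` is a probability measure on `[0,∞)` with `μ({0}) < 1` and `U = Σ_{n≥0} μ^{*n}`
is its renewal measure, then `U([0,1]) < ∞` and for every `h ≥ 0`,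
`U([0,h]) ≤ (⌊h⌋ + 1) · U([0,1])`; in particular `U([0,h])` grows at most linearly in `h`. -/
theorem renewal_measure_linear_growth
    (μ : Measure ℝ) [IsProbabilityMeasure μ]
    (hsupp : μ (Set.Iio 0) = 0)
    (hzero : μ {0} < 1)
    (μpow : ℕ → Measure ℝ)
    (hpow0 : μpow 0 = Measure.dirac 0)
    (hpowsucc : ∀ n, μpow (n + 1) = (μpow n).conv μ)
    (U : Measure ℝ) (hU : U = Measure.sum μpow) :
    U (Set.Icc 0 1) < ⊤ ∧
      ∀ h : ℝ, 0 ≤ h →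
        U (Set.Icc 0 h) ≤ ((⌊h⌋₊ : ENNReal) + 1) * U (Set.Icc 0 1) := by
  have hμpow : μpow = convPow μ := funext fun n => by
    induction n with
    | zero => exact hpow0
    | succ n ih => rw [hpowsucc, ih, convPow_succ]
  subst hμpow hU
  change renewalMeasure μ (Icc 0 1) < ⊤ ∧ ∀ h : ℝ, 0 ≤ h →
    renewalMeasure μ (Icc 0 h) ≤ (⌊h⌋₊ + 1) * renewalMeasure μ (Icc 0 1)
  have hshift := renewalMeasure_Icc_le hsupp
  have hIic_zero : μ (Iic 0) < 1 := by
    calc μ (Iic 0) ≤ μ (Iio 0) + μ {0} := by rw [← Iio_union_right]; exact measure_union_le _ _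
      _ < 1 := by rwa [hsupp, zero_add]
  obtain ⟨δ, hδ, hδ_lt⟩ := exists_gt_measure_Iic_lt hIic_zero
  refine ⟨?_, fun h _ => by simpa using measure_Icc_zero_le_floor_mul _ one_pos (hshift · 1) h⟩
  calc renewalMeasure μ (Icc 0 1) ≤ (⌊1 / δ⌋₊ + 1) * renewalMeasure μ (Icc 0 δ) :=
        measure_Icc_zero_le_floor_mul _ hδ (hshift · δ) 1
    _ < ⊤ := ENNReal.mul_lt_top (by simp) <|
        (measure_mono Icc_subset_Iic_self).trans_lt (renewalMeasure_Iic_lt_top hsupp hδ_lt)
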